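/- Let w be a real n×n matrix with I − w invertible, Δ = (I − w)^{-1}, r = Δᵀ𝟙, s = Δᵀ(r ∘ w⁰), and let δ₁, δ₂ ∈ ℝ. With v^(1) = Δ(w⁰ ∘ v⁰ + w_g ∘ x^(1) − w_b ∘ y^(1)) and v^(2) = Δ(w⁰ ∘ v^(1) + w_g ∘ x^(2) − w_b ∘ y^(2)), the weighted two-election objective satisfies ∑_i (δ₁ v_i^(1) + δ₂ v_i^(2)) = ∑_i (δ₁ r_i + δ₂ s_i) w⁰_i v⁰_i + ∑_i (δ₁ r_i + δ₂ s_i)(w_{g,i} x_i^(1) − w_{b,i} y_i^(1)) + δ₂ ∑_i r_i (w_{g,i} x_i^(2) − w_{b,i} y_i^(2)). -/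

import Mathlib

open Matrix BigOperators Finset

/-! Summing the opinions `Δ f` amounts to pairing `f` with the column sums `r = 𝟙ᵀΔ`. Since
`v^(2) = Δ(w⁰ ∘ Δ f₁ + g₂)`, its sum is `r ⬝ (w⁰ ∘ Δ f₁) + r ⬝ g₂`, and moving `Δ` across the
pairing turns the first term into `s ⬝ f₁` with `s = (r ∘ w⁰)ᵀΔ`. Collecting the `f₁`-terms of
both phases gives the coefficient `δ₁ r + δ₂ s`. -/

namespace Matrix

variable {ι κ R : Type*} [Fintype ι] [Fintype κ] [CommSemiring R]

theorem dotProduct_hadamard_assoc (u w v : ι → R) : u ⬝ᵥ (w * v) = (u * w) ⬝ᵥ v := by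
  simp only [dotProduct, Pi.mul_apply, mul_assoc]

theorem sum_mulVec_eq_one_vecMul_dotProduct (A : Matrix ι κ R) (f : κ → R) :
    ∑ i, (A *ᵥ f) i = (1 ᵥ* A) ⬝ᵥ f := by
  rw [← one_dotProduct, dotProduct_mulVec]

theorem sum_mulVec_hadamard_mulVec_add (A : Matrix ι ι R) (w f g : ι → R) :
    ∑ i, (A *ᵥ (w * A *ᵥ f + g)) i = ((1 ᵥ* A) * w) ᵥ* A ⬝ᵥ f + (1 ᵥ* A) ⬝ᵥ g := by
  rw [sum_mulVec_eq_one_vecMul_dotProduct, dotProduct_add, dotProduct_hadamard_assoc,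
    dotProduct_mulVec]

theorem sum_two_phase_mulVec (A : Matrix ι ι R) (w f g : ι → R) (δ₁ δ₂ : R) :
    ∑ i, (δ₁ * (A *ᵥ f) i + δ₂ * (A *ᵥ (w * A *ᵥ f + g)) i) =
      (δ₁ • (1 ᵥ* A) + δ₂ • ((1 ᵥ* A) * w) ᵥ* A) ⬝ᵥ f + δ₂ * (1 ᵥ* A) ⬝ᵥ g := by
  rw [sum_add_distrib, ← mul_sum, ← mul_sum, sum_mulVec_eq_one_vecMul_dotProduct,
    sum_mulVec_hadamard_mulVec_add, add_dotProduct, smul_dotProduct, smul_dotProduct,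
    smul_eq_mul, smul_eq_mul]
  ring

end Matrix

theorem multiple_elections_objective_general (n : ℕ) (Δ : Matrix (Fin n) (Fin n) ℝ)
    (w0 wg wb v0 x1 x2 y1 y2 : Fin n → ℝ) (δ1 δ2 : ℝ)
    (r s : Fin n → ℝ)
    (hr : ∀ i, r i = ∑ j, Δ j i)
    (hs : ∀ i, s i = ∑ j, r j * w0 j * Δ j i)
    (v1 v2 : Fin n → ℝ)
    (hv1 : v1 = Δ.mulVec (fun i => w0 i * v0 i + wg i * x1 i - wb i * y1 i))
    (hv2 : v2 = Δ.mulVec (fun i => w0 i * v1 i + wg i * x2 i - wb i * y2 i)) :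
    ∑ i, (δ1 * v1 i + δ2 * v2 i) =
      ∑ i, (δ1 * r i + δ2 * s i) * w0 i * v0 i
        + ∑ i, (δ1 * r i + δ2 * s i) * (wg i * x1 i - wb i * y1 i)
        + δ2 * ∑ i, r i * (wg i * x2 i - wb i * y2 i) := by
  have hr' : r = 1 ᵥ* Δ := funext fun i => by simp [hr, vecMul, dotProduct]
  have hs' : s = (r * w0) ᵥ* Δ := funext fun i => by simp [hs, vecMul, dotProduct]
  set f1 : Fin n → ℝ := fun i => w0 i * v0 i + wg i * x1 i - wb i * y1 i
  have hv2' : v2 = Δ *ᵥ (w0 * Δ *ᵥ f1 + fun i => wg i * x2 i - wb i * y2 i) := by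
    rw [hv2, hv1]
    congr 1
    funext i
    simp only [Pi.add_apply, Pi.mul_apply]
    ring
  rw [hv2', hv1, sum_two_phase_mulVec, ← hr', ← hs', ← sum_add_distrib]
  simp only [dotProduct, f1, Pi.add_apply, Pi.smul_apply, smul_eq_mul]
  congr 1
  exact sum_congr rfl fun i _ => by ring

/-- Multiple-elections objective: with `Δ = (I − w)⁻¹`, `r = Δᵀ𝟙`, `s = Δᵀ(r ∘ w⁰)`, and
two-phase opinions `v^(1) = Δ(w⁰ ∘ v⁰ + w_g ∘ x^(1) − w_b ∘ y^(1))`,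
`v^(2) = Δ(w⁰ ∘ v^(1) + w_g ∘ x^(2) − w_b ∘ y^(2))`, the weighted objective satisfies
`∑ᵢ (δ₁ vᵢ^(1) + δ₂ vᵢ^(2)) = ∑ᵢ (δ₁ rᵢ + δ₂ sᵢ) w⁰ᵢ v⁰ᵢ
  + ∑ᵢ (δ₁ rᵢ + δ₂ sᵢ)(w_{g,i} xᵢ^(1) − w_{b,i} yᵢ^(1))
  + δ₂ ∑ᵢ rᵢ (w_{g,i} xᵢ^(2) − w_{b,i} yᵢ^(2))`. -/
theorem multiple_elections_objective (n : ℕ) (w Δ : Matrix (Fin n) (Fin n) ℝ)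
    (hinv : IsUnit (1 - w)) (hΔ : Δ = (1 - w)⁻¹)
    (w0 wg wb v0 x1 x2 y1 y2 : Fin n → ℝ) (δ1 δ2 : ℝ)
    (r s : Fin n → ℝ)
    (hr : ∀ i, r i = ∑ j, Δ j i)
    (hs : ∀ i, s i = ∑ j, r j * w0 j * Δ j i)
    (v1 v2 : Fin n → ℝ)
    (hv1 : v1 = Δ.mulVec (fun i => w0 i * v0 i + wg i * x1 i - wb i * y1 i))
    (hv2 : v2 = Δ.mulVec (fun i => w0 i * v1 i + wg i * x2 i - wb i * y2 i)) :
    ∑ i, (δ1 * v1 i + δ2 * v2 i) =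
      ∑ i, (δ1 * r i + δ2 * s i) * w0 i * v0 i
        + ∑ i, (δ1 * r i + δ2 * s i) * (wg i * x1 i - wb i * y1 i)
        + δ2 * ∑ i, r i * (wg i * x2 i - wb i * y2 i) :=
  multiple_elections_objective_general n Δ w0 wg wb v0 x1 x2 y1 y2 δ1 δ2 r s hr hs v1 v2 hv1 hv2
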